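/- arXiv:1804.04042 — 3 statements merged into one kernel-verified Lean document; each statement's English description precedes it below -/
import Mathlib

section
/- Let Φ and Ψ be quantum Latin squares of dimension n. Then Φ and Ψ are orthogonal if and only if Φ* and Ψ are orthogonal, where Φ* is the conjugate quantum Latin square with entries |Φ*_ij⟩ obtained by taking the componentwise complex conjugate of |Φ_ij⟩ in the computational basis. (In particular Φ* is again a quantum Latin square.) -/
open scoped ComplexConjugate Kronecker

noncomputable section

/-- A quantum Latin square of dimension `n`: an `n × n` array of vectors of `ℂ^n`
such that every row and every column is an orthonormal basis of `ℂ^n`. -/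
def IsQLS (n : ℕ) (Φ : Fin n → Fin n → EuclideanSpace ℂ (Fin n)) : Prop :=
  (∀ i, Orthonormal ℂ (fun j => Φ i j)) ∧
  (∀ i, Submodule.span ℂ (Set.range fun j => Φ i j) = ⊤) ∧
  (∀ j, Orthonormal ℂ (fun i => Φ i j)) ∧
  (∀ j, Submodule.span ℂ (Set.range fun i => Φ i j) = ⊤)

/-- The tensor (Kronecker) product of two vectors of `ℂ^n`, as a vector of `ℂ^n ⊗ ℂ^n`. -/
def tensorVec {n : ℕ} (u v : EuclideanSpace ℂ (Fin n)) :
    EuclideanSpace ℂ (Fin n × Fin n) :=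
  WithLp.toLp 2 (fun p : Fin n × Fin n => u p.1 * v p.2)

/-- Two quantum Latin squares are orthogonal when the family `|Φ_ij⟩ ⊗ |Ψ_ij⟩` is an
orthonormal basis of `ℂ^n ⊗ ℂ^n`. -/
def QLSOrthogonal {n : ℕ} (Φ Ψ : Fin n → Fin n → EuclideanSpace ℂ (Fin n)) : Prop :=
  Orthonormal ℂ (fun p : Fin n × Fin n => tensorVec (Φ p.1 p.2) (Ψ p.1 p.2)) ∧
  Submodule.span ℂ
    (Set.range fun p : Fin n × Fin n => tensorVec (Φ p.1 p.2) (Ψ p.1 p.2)) = ⊤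

/-- The outer product `|u⟩⟨v|` as a matrix. -/
def outerMat {ι : Type*} (u v : ι → ℂ) : Matrix ι ι ℂ :=
  Matrix.of fun x y => u x * (starRingEnd ℂ) (v y)

/-- The conjugate quantum Latin square: componentwise complex conjugation in the
computational basis. -/
def conjQLS {n : ℕ} (Φ : Fin n → Fin n → EuclideanSpace ℂ (Fin n)) :
    Fin n → Fin n → EuclideanSpace ℂ (Fin n) :=
  fun i j => (WithLp.toLp 2 (fun x => (starRingEnd ℂ) (Φ i j x)) : EuclideanSpace ℂ (Fin n))

/-! Conjugating coordinates conjugates inner products, so it preserves orthonormality; and since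
`⟪Φ_p, Φ_p⟫` is real, each product `⟪Φ_p, Φ_q⟫ ⟪Ψ_p, Ψ_q⟫` keeps both its vanishing and, on the
diagonal, its value. Spanning follows from orthonormality by counting dimensions. -/

open scoped InnerProductSpace

section

variable {ι : Type*} [Fintype ι]

def conjVec (u : EuclideanSpace ℂ ι) : EuclideanSpace ℂ ι :=
  WithLp.toLp 2 fun x => conj (u x)

lemma inner_conjVec (u v : EuclideanSpace ℂ ι) :
    ⟪conjVec u, conjVec v⟫_ℂ = conj ⟪u, v⟫_ℂ := by
  simp [conjVec, PiLp.inner_apply, mul_comm]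

lemma Orthonormal.conjVec {κ : Type*} {v : κ → EuclideanSpace ℂ ι} (hv : Orthonormal ℂ v) :
    Orthonormal ℂ fun k => conjVec (v k) := by
  classical
  rw [orthonormal_iff_ite] at hv ⊢
  intro k l
  rw [inner_conjVec, hv]
  split_ifs <;> simp

lemma Orthonormal.span_eq_top_of_card_eq {κ : Type*} [Fintype κ] {v : κ → EuclideanSpace ℂ ι}
    (hv : Orthonormal ℂ v) (hcard : Fintype.card κ = Fintype.card ι) :
    Submodule.span ℂ (Set.range v) = ⊤ :=
  hv.linearIndependent.span_eq_top_of_card_eq_finrank' (by simp [hcard])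

end

lemma inner_tensorVec {n : ℕ} (u v u' v' : EuclideanSpace ℂ (Fin n)) :
    ⟪tensorVec u v, tensorVec u' v'⟫_ℂ = ⟪u, u'⟫_ℂ * ⟪v, v'⟫_ℂ := by
  simp only [PiLp.inner_apply, RCLike.inner_apply, tensorVec]
  rw [Finset.sum_mul_sum, ← Finset.sum_product']
  refine Finset.sum_congr rfl fun p _ => ?_
  simp only [map_mul]
  ring

lemma orthonormal_tensorVec_conjVec_iff {n : ℕ} {κ : Type*}
    (u v : κ → EuclideanSpace ℂ (Fin n)) :
    Orthonormal ℂ (fun k => tensorVec (conjVec (u k)) (v k)) ↔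
      Orthonormal ℂ (fun k => tensorVec (u k) (v k)) := by
  classical
  simp only [orthonormal_iff_ite, inner_tensorVec, inner_conjVec]
  refine forall₂_congr fun k l => ?_
  split_ifs with hkl
  · rw [hkl, inner_self_conj]
  · rw [mul_eq_zero, mul_eq_zero, map_eq_zero]

lemma isQLS_iff_orthonormal {n : ℕ} (Φ : Fin n → Fin n → EuclideanSpace ℂ (Fin n)) :
    IsQLS n Φ ↔ (∀ i, Orthonormal ℂ fun j => Φ i j) ∧ ∀ j, Orthonormal ℂ fun i => Φ i j :=
  ⟨fun h => ⟨h.1, h.2.2.1⟩, fun h =>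
    ⟨h.1, fun i => (h.1 i).span_eq_top_of_card_eq rfl,
      h.2, fun j => (h.2 j).span_eq_top_of_card_eq rfl⟩⟩

lemma qlsOrthogonal_iff_orthonormal {n : ℕ} (Φ Ψ : Fin n → Fin n → EuclideanSpace ℂ (Fin n)) :
    QLSOrthogonal Φ Ψ ↔
      Orthonormal ℂ fun p : Fin n × Fin n => tensorVec (Φ p.1 p.2) (Ψ p.1 p.2) :=
  ⟨And.left, fun h => ⟨h, h.span_eq_top_of_card_eq rfl⟩⟩

theorem qls_orthogonal_iff_conj_orthogonal_general (n : ℕ)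
    (Φ Ψ : Fin n → Fin n → EuclideanSpace ℂ (Fin n))
    (hΦ : IsQLS n Φ) :
    IsQLS n (conjQLS Φ) ∧ (QLSOrthogonal Φ Ψ ↔ QLSOrthogonal (conjQLS Φ) Ψ) := by
  rw [isQLS_iff_orthonormal] at hΦ ⊢
  rw [qlsOrthogonal_iff_orthonormal, qlsOrthogonal_iff_orthonormal]
  exact ⟨⟨fun i => (hΦ.1 i).conjVec, fun j => (hΦ.2 j).conjVec⟩,
    (orthonormal_tensorVec_conjVec_iff _ _).symm⟩

/-- The conjugate `Φ*` of a QLS `Φ` is again a QLS, and `Φ, Ψ` are orthogonal iff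
`Φ*, Ψ` are orthogonal. -/
theorem qls_orthogonal_iff_conj_orthogonal (n : ℕ)
    (Φ Ψ : Fin n → Fin n → EuclideanSpace ℂ (Fin n))
    (hΦ : IsQLS n Φ) (hΨ : IsQLS n Ψ) :
    IsQLS n (conjQLS Φ) ∧ (QLSOrthogonal Φ Ψ ↔ QLSOrthogonal (conjQLS Φ) Ψ) :=
  qls_orthogonal_iff_conj_orthogonal_general n Φ Ψ hΦ
end
end

section
/- Let Φ and Ψ be any two quantum Latin squares of dimension n (no orthogonality assumed). Then ∑_{i,j,p=0}^{n−1} ⟨Φ_ij|Φ_pj⟩ · |Ψ_ij⟩⟨Ψ_pj| ⊗ |i⟩⟨p| equals the identity on ℂ^n ⊗ ℂ^n, and likewise ∑_{i,j,p=0}^{n−1} ⟨Ψ_ij|Ψ_pj⟩ · |Φ_ij⟩⟨Φ_pj| ⊗ |i⟩⟨p| equals the identity on ℂ^n ⊗ ℂ^n. -/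
open scoped ComplexConjugate Kronecker

noncomputable section

/-!
Column orthonormality of `Φ` gives `⟨Φ_ij|Φ_pj⟩ = δ_ip`, so the sum collapses to
`∑_i (∑_j |Ψ_ij⟩⟨Ψ_ij|) ⊗ |i⟩⟨i|`. Each row of `Ψ` is an orthonormal basis, so by completeness
the inner sum is the identity, and `∑_i 1 ⊗ |i⟩⟨i| = 1 ⊗ 1`.
-/

namespace Matrix

theorem sum_kronecker {α ι l m n p : Type*} [NonUnitalNonAssocSemiring α] [Fintype ι]
    (A : ι → Matrix l m α) (B : Matrix n p α) : (∑ i, A i) ⊗ₖ B = ∑ i, A i ⊗ₖ B := by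
  ext; simp [sum_apply, Finset.sum_mul]

theorem kronecker_sum {α ι l m n p : Type*} [NonUnitalNonAssocSemiring α] [Fintype ι]
    (A : Matrix l m α) (B : ι → Matrix n p α) : A ⊗ₖ (∑ i, B i) = ∑ i, A ⊗ₖ B i := by
  ext; simp [sum_apply, Finset.mul_sum]

end Matrix

open Matrix

variable {ι κ m : Type*} [Fintype ι] [Fintype κ] [Fintype m] [DecidableEq m]

theorem OrthonormalBasis.sum_outerMat_self (b : OrthonormalBasis κ ℂ (EuclideanSpace ℂ m)) :
    ∑ j, outerMat (b j) (b j) = 1 := by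
  ext a c
  have h := b.sum_inner_mul_inner (EuclideanSpace.single a 1) (EuclideanSpace.single c 1)
  simp only [EuclideanSpace.inner_single_left, EuclideanSpace.inner_single_right, map_one,
    one_mul] at h
  simp [outerMat, Matrix.sum_apply, h, one_apply, eq_comm]

theorem Orthonormal.sum_inner_smul {𝕜 E M : Type*} [RCLike 𝕜] [NormedAddCommGroup E]
    [InnerProductSpace 𝕜 E] [AddCommMonoid M] [Module 𝕜 M] [DecidableEq ι] {v : ι → E}
    (hv : Orthonormal 𝕜 v) (f : ι → M) (i : ι) :
    ∑ p, (inner 𝕜 (v i) (v p) : 𝕜) • f p = f i := by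
  simp [orthonormal_iff_ite.mp hv]

theorem sum_inner_smul_outerMat_kronecker_single [DecidableEq ι] {E : Type*}
    [NormedAddCommGroup E] [InnerProductSpace ℂ E]
    (A : ι → κ → E) (B : ι → κ → EuclideanSpace ℂ m)
    (hA : ∀ j, Orthonormal ℂ fun i => A i j)
    (hB : ∀ i, Orthonormal ℂ (B i)) (hB_span : ∀ i, Submodule.span ℂ (Set.range (B i)) = ⊤) :
    ∑ i, ∑ j, ∑ p, (inner ℂ (A i j) (A p j) : ℂ) •
        (outerMat (B i j) (B p j) ⊗ₖ single i p (1 : ℂ)) = 1 := by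
  let rowBasis i : OrthonormalBasis κ ℂ (EuclideanSpace ℂ m) :=
    OrthonormalBasis.mk (hB i) (hB_span i).ge
  calc ∑ i, ∑ j, ∑ p, (inner ℂ (A i j) (A p j) : ℂ) •
          (outerMat (B i j) (B p j) ⊗ₖ single i p (1 : ℂ))
      = ∑ i, ∑ j, outerMat (rowBasis i j) (rowBasis i j) ⊗ₖ single i i (1 : ℂ) := by
        simp only [(hA _).sum_inner_smul, rowBasis, OrthonormalBasis.coe_mk]
    _ = ∑ i, (1 : Matrix m m ℂ) ⊗ₖ single i i (1 : ℂ) := by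
        simp only [← sum_kronecker, OrthonormalBasis.sum_outerMat_self]
    _ = 1 := by
        rw [← kronecker_sum, sum_single_one, one_kronecker_one]

/-- For any two QLS `Φ, Ψ` (no orthogonality assumed),
`∑_{i,j,p} ⟨Φ_ij|Φ_pj⟩ |Ψ_ij⟩⟨Ψ_pj| ⊗ |i⟩⟨p| = I` and
`∑_{i,j,p} ⟨Ψ_ij|Ψ_pj⟩ |Φ_ij⟩⟨Φ_pj| ⊗ |i⟩⟨p| = I` on `ℂ^n ⊗ ℂ^n`. -/
theorem qls_partial_trace_identity (n : ℕ)
    (Φ Ψ : Fin n → Fin n → EuclideanSpace ℂ (Fin n))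
    (hΦ : IsQLS n Φ) (hΨ : IsQLS n Ψ) :
    (∑ i : Fin n, ∑ j : Fin n, ∑ p : Fin n,
        (inner ℂ (Φ i j) (Φ p j) : ℂ) •
          ((outerMat (Ψ i j) (Ψ p j)) ⊗ₖ Matrix.single i p (1 : ℂ)) =
      (1 : Matrix (Fin n × Fin n) (Fin n × Fin n) ℂ)) ∧
    (∑ i : Fin n, ∑ j : Fin n, ∑ p : Fin n,
        (inner ℂ (Ψ i j) (Ψ p j) : ℂ) •
          ((outerMat (Φ i j) (Φ p j)) ⊗ₖ Matrix.single i p (1 : ℂ)) =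
      (1 : Matrix (Fin n × Fin n) (Fin n × Fin n) ℂ)) := by
  obtain ⟨hΦ_row, hΦ_row_span, hΦ_col, -⟩ := hΦ
  obtain ⟨hΨ_row, hΨ_row_span, hΨ_col, -⟩ := hΨ
  exact ⟨sum_inner_smul_outerMat_kronecker_single Φ Ψ hΦ_col hΨ_row hΨ_row_span,
    sum_inner_smul_outerMat_kronecker_single Ψ Φ hΨ_col hΦ_row hΦ_row_span⟩
end
end

section
/- Let n ≥ 2. Any family of m mutually orthogonal quantum Latin squares of dimension n satisfies m ≤ n − 1. -/
open scoped ComplexConjugate Kronecker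

noncomputable section

/-! Fix the reference cell `(0, 0)` and give the cell `(1, j)` of the square `Φ k` the weight
`w k j = |⟨Φ k 1 j, Φ k 0 0⟩|²`. Row `1` is an orthonormal basis, so `∑ j, w k j = 1` (Parseval);
column `0` is orthonormal, so `w k 0 = 0`; and orthogonality of `Φ k` and `Φ l` makes
`Φ k 0 0 ⊗ Φ l 0 0` orthogonal to `Φ k 1 j ⊗ Φ l 1 j`, i.e. `w k j * w l j = 0`. So each column `j ≠ 0`
carries total weight at most `1`, and summing all weights gives `m ≤ n - 1`. -/

open scoped InnerProductSpace

lemma Finset.sum_le_of_pairwise_mul_eq_zero {ι R : Type*} [Semiring R] [NoZeroDivisors R]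
    [Preorder R] (s : Finset ι) {c : ι → R} {b : R}
    (hcb : ∀ k, c k ≤ b) (hb : 0 ≤ b)
    (hdisj : Pairwise fun k l => c k * c l = 0) : ∑ k ∈ s, c k ≤ b := by
  by_cases hzero : ∀ k ∈ s, c k = 0
  · rwa [Finset.sum_eq_zero hzero]
  obtain ⟨k₀, hk₀s, hk₀⟩ := not_forall₂.mp hzero
  have hsingle : ∑ k ∈ s, c k = c k₀ := Finset.sum_eq_single_of_mem k₀ hk₀s fun l _ hl =>
    (mul_eq_zero.mp (hdisj hl)).resolve_right hk₀
  exact hsingle ▸ hcb k₀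

theorem card_le_card_sub_one_of_sum_eq_one {κ ι : Type*} [Fintype κ] [Fintype ι]
    [DecidableEq ι] (c : κ → ι → ℝ) (j₀ : ι) (hc : ∀ k j, 0 ≤ c k j)
    (hrow : ∀ k, ∑ j, c k j = 1) (hj₀ : ∀ k, c k j₀ = 0)
    (hdisj : ∀ j, Pairwise fun k l => c k j * c l j = 0) :
    Fintype.card κ ≤ Fintype.card ι - 1 := by
  have hle_one : ∀ k j, c k j ≤ 1 := fun k j =>
    hrow k ▸ Finset.single_le_sum (fun j _ => hc k j) (Finset.mem_univ j)
  have hcol : ∀ j, ∑ k, c k j ≤ 1 := fun j =>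
    Finset.univ.sum_le_of_pairwise_mul_eq_zero (fun k => hle_one k j)
      zero_le_one (hdisj j)
  suffices (Fintype.card κ : ℝ) ≤ (Fintype.card ι - 1 : ℕ) by exact_mod_cast this
  calc
    (Fintype.card κ : ℝ) = ∑ k, ∑ j, c k j := by simp [hrow]
    _ = ∑ j ∈ Finset.univ.erase j₀, ∑ k, c k j := by
      rw [Finset.sum_comm, ← Finset.add_sum_erase _ _ (Finset.mem_univ j₀)]
      simp [hj₀]
    _ ≤ ∑ j ∈ Finset.univ.erase j₀, 1 := Finset.sum_le_sum fun j _ => hcol j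
    _ = (Fintype.card ι - 1 : ℕ) := by simp [Finset.card_erase_of_mem]

namespace IsQLS

variable {n : ℕ} {Φ : Fin n → Fin n → EuclideanSpace ℂ (Fin n)}

lemma norm_eq_one (h : IsQLS n Φ) (i j : Fin n) : ‖Φ i j‖ = 1 :=
  (h.1 i).1 j

lemma inner_eq_zero_of_ne_row (h : IsQLS n Φ) (j : Fin n) {i i' : Fin n} (hi : i ≠ i') :
    ⟪Φ i j, Φ i' j⟫_ℂ = 0 :=
  (h.2.2.1 j).2 hi

lemma sum_sq_norm_inner_row (h : IsQLS n Φ) (i : Fin n) (x : EuclideanSpace ℂ (Fin n)) :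
    ∑ j, ‖⟪Φ i j, x⟫_ℂ‖ ^ 2 = ‖x‖ ^ 2 := by
  simpa using (OrthonormalBasis.mk (h.1 i) (h.2.1 i).ge).sum_sq_norm_inner_right x

end IsQLS

lemma QLSOrthogonal.inner_mul_inner_eq_zero {n : ℕ}
    {Φ Ψ : Fin n → Fin n → EuclideanSpace ℂ (Fin n)} (h : QLSOrthogonal Φ Ψ)
    {p q : Fin n × Fin n} (hpq : p ≠ q) :
    ⟪Φ p.1 p.2, Φ q.1 q.2⟫_ℂ * ⟪Ψ p.1 p.2, Ψ q.1 q.2⟫_ℂ = 0 := by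
  rw [← inner_tensorVec]
  exact h.1.2 hpq

/-- Upper bound: any family of `m` mutually orthogonal quantum Latin squares of
dimension `n ≥ 2` satisfies `m ≤ n - 1`. -/
theorem moqls_upper_bound (n m : ℕ) (hn : 2 ≤ n)
    (Φ : Fin m → Fin n → Fin n → EuclideanSpace ℂ (Fin n))
    (hQLS : ∀ k, IsQLS n (Φ k))
    (hMO : ∀ k l, k ≠ l → QLSOrthogonal (Φ k) (Φ l)) :
    m ≤ n - 1 := by
  let r₀ : Fin n := ⟨0, by omega⟩
  let r₁ : Fin n := ⟨1, by omega⟩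
  have hr : r₁ ≠ r₀ := by simp [r₀, r₁, Fin.ext_iff]
  simpa using card_le_card_sub_one_of_sum_eq_one
    (fun k j => ‖⟪Φ k r₁ j, Φ k r₀ r₀⟫_ℂ‖ ^ 2) r₀ (fun _ _ => by positivity)
    (fun k => by simp [(hQLS k).sum_sq_norm_inner_row, (hQLS k).norm_eq_one])
    (fun k => by simp [(hQLS k).inner_eq_zero_of_ne_row r₀ hr])
    (fun j k l hkl => by
      dsimp only
      rw [← mul_pow, ← norm_mul, (hMO k l hkl).inner_mul_inner_eq_zero (p := (r₁, j))
        (q := (r₀, r₀)) (by simp [hr])]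
      simp)
end
end
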